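/- Let X_t be an irreducible continuous-time Markov chain on a finite set V with generator L. Fix V_0 ⊂ V and a positive function g : V_0 → (0,∞), and let u be the harmonic extension of g: Lu = 0 on V∖V_0, u = g on V_0. Then for every probability measure μ on V, ∫_V (Lu)/u dμ = ∫_{V_0} (L_{V_0} g)/g dμ, where L_{V_0} is the generator of the trace process of X_t on V_0. -/

import Mathlib

open Finset Filter Topology

noncomputable section

/-- Generator of a continuous-time Markov chain with jump rates `R`. -/
def gen {V : Type*} [Fintype V] (R : V → V → ℝ) (f : V → ℝ) (x : V) : ℝ :=
  ∑ y, R x y * (f y - f x)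

/-- Generator of a chain restricted to the subset `W` (e.g. a trace process). -/
def genOn {V : Type*} [Fintype V] [DecidableEq V] (W : Finset V) (R : V → V → ℝ)
    (f : V → ℝ) (x : V) : ℝ :=
  ∑ y ∈ W, R x y * (f y - f x)

/-- Detailed balance (reversibility) of `π` for the rates `R`. -/
def Reversible {V : Type*} (R : V → V → ℝ) (π : V → ℝ) : Prop :=
  ∀ x y, π x * R x y = π y * R y x

/-- Stationarity of `π` for the rates `R`. -/
def Stationary {V : Type*} [Fintype V] (R : V → V → ℝ) (π : V → ℝ) : Prop :=
  ∀ y, ∑ x, π x * R x y = π y * ∑ z, R y z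

/-- Irreducibility of the rates `R`. -/
def Irred {V : Type*} (R : V → V → ℝ) : Prop :=
  ∀ x y : V, Relation.ReflTransGen (fun a b => 0 < R a b) x y

/-- `h` is the equilibrium potential `h(x) = P_x[H_A < H_B]` : it equals `1` on `A`,
`0` on `B` and is harmonic elsewhere. -/
def IsEqPotential {V : Type*} [Fintype V] (R : V → V → ℝ) (A B : Finset V)
    (h : V → ℝ) : Prop :=
  (∀ x ∈ A, h x = 1) ∧ (∀ x ∈ B, h x = 0) ∧ ∀ x, x ∉ A → x ∉ B → gen R h x = 0

/-- The capacity `Cap(A,B) = ∑_{x∈A} π(x) λ(x) P_x[H_B < H_A⁺]`, expressed through the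
equilibrium potential `h = h_{A,B}` as `-∑_{x∈A} π(x) (L h)(x)`. -/
def capFor {V : Type*} [Fintype V] (R : V → V → ℝ) (π : V → ℝ) (A : Finset V)
    (h : V → ℝ) : ℝ :=
  ∑ x ∈ A, π x * (-(gen R h x))

/- Any function harmonic off `V₀` is the `hm`-average of its values on `V₀` (maximum principle and
irreducibility). Applied to `u - u x` for `x ∈ V₀`, this turns every jump of `x` out of `V₀` into a
jump to `V₀` weighted by `hm`, so `(L u)(x) = (L_{V₀} g)(x)` on `V₀`, while `L u = 0` off `V₀`. -/

section

variable {V : Type*} [Fintype V] {R : V → V → ℝ}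

lemma gen_sub (f h : V → ℝ) (x : V) :
    gen R (fun z => f z - h z) x = gen R f x - gen R h x := by
  simp only [gen, ← Finset.sum_sub_distrib]
  exact Finset.sum_congr rfl fun y _ => by ring

lemma gen_sub_const (f : V → ℝ) (c : ℝ) (x : V) :
    gen R (fun z => f z - c) x = gen R f x := by
  simp only [gen, sub_sub_sub_cancel_right]

lemma gen_sum_mul {ι : Type*} (s : Finset ι) (a : V → ι → ℝ) (c : ι → ℝ) (x : V) :
    gen R (fun z => ∑ i ∈ s, a z i * c i) x = ∑ i ∈ s, gen R (fun z => a z i) x * c i := by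
  simp only [gen, ← Finset.sum_sub_distrib, Finset.mul_sum, Finset.sum_mul]
  rw [Finset.sum_comm]
  exact Finset.sum_congr rfl fun _ _ => Finset.sum_congr rfl fun _ _ => by ring

lemma apply_eq_of_gen_eq_zero_of_isMax (hR : ∀ x y, 0 ≤ R x y) {f : V → ℝ} {a b : V}
    (hmax : ∀ y, f y ≤ f a) (ha : gen R f a = 0) (hab : 0 < R a b) : f b = f a := by
  have hterm : ∀ y ∈ Finset.univ, R a y * (f y - f a) ≤ 0 := fun y _ =>
    mul_nonpos_of_nonneg_of_nonpos (hR a y) (sub_nonpos.mpr (hmax y))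
  have hb := (Finset.sum_eq_zero_iff_of_nonpos hterm).mp ha b (Finset.mem_univ b)
  linarith [(mul_eq_zero.mp hb).resolve_left hab.ne']

end

namespace Irred

variable {V : Type*} [Fintype V] {R : V → V → ℝ}

lemma exists_mem_isMax_of_gen_eq_zero (hirr : Irred R) (hR : ∀ x y, 0 ≤ R x y)
    {V₀ : Finset V} (hV₀ : V₀.Nonempty) {f : V → ℝ} (hf : ∀ x, x ∉ V₀ → gen R f x = 0) :
    ∃ w ∈ V₀, ∀ x, f x ≤ f w := by
  obtain ⟨v, hv⟩ := hV₀
  obtain ⟨x₀, -, hx₀⟩ := Finset.exists_max_image Finset.univ f ⟨v, Finset.mem_univ v⟩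
  have hmax : ∀ y, f y ≤ f x₀ := fun y => hx₀ y (Finset.mem_univ y)
  -- follow a path of positive rates from `x₀` to `V₀`: `f` stays maximal until it enters `V₀`
  suffices ∀ a, Relation.ReflTransGen (fun p q => 0 < R p q) a v → f a = f x₀ →
      ∃ w ∈ V₀, f w = f x₀ by
    obtain ⟨w, hw, hfw⟩ := this x₀ (hirr x₀ v) rfl
    exact ⟨w, hw, fun x => hfw ▸ hmax x⟩
  intro a hpath
  induction hpath using Relation.ReflTransGen.head_induction_on with
  | refl => exact fun hfv => ⟨v, hv, hfv⟩
  | @head a c hac _ ih =>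
    intro hfa
    by_cases ha : a ∈ V₀
    · exact ⟨a, ha, hfa⟩
    · refine ih ?_
      rw [← hfa] at hmax ⊢
      exact apply_eq_of_gen_eq_zero_of_isMax hR hmax (hf a ha) hac

lemma eq_of_gen_eq_zero (hirr : Irred R) (hR : ∀ x y, 0 ≤ R x y)
    {V₀ : Finset V} (hV₀ : V₀.Nonempty) {f h : V → ℝ}
    (hf : ∀ x, x ∉ V₀ → gen R f x = 0) (hh : ∀ x, x ∉ V₀ → gen R h x = 0)
    (heq : ∀ x ∈ V₀, f x = h x) : f = h := by
  have hle : ∀ f h : V → ℝ, (∀ x, x ∉ V₀ → gen R f x = 0) → (∀ x, x ∉ V₀ → gen R h x = 0) →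
      (∀ x ∈ V₀, f x = h x) → ∀ x, f x ≤ h x := by
    intro f h hf hh heq x
    obtain ⟨w, hw, hmax⟩ := hirr.exists_mem_isMax_of_gen_eq_zero hR hV₀
      (f := fun z => f z - h z) fun x hx => by rw [gen_sub, hf x hx, hh x hx, sub_zero]
    linarith [hmax x, heq w hw]
  exact funext fun x => le_antisymm (hle f h hf hh heq x)
    (hle h f hh hf (fun x hx => (heq x hx).symm) x)

variable [DecidableEq V] {V₀ : Finset V} {hm : V → V → ℝ}

lemma eq_sum_harmonicMeasure_mul (hirr : Irred R) (hR : ∀ x y, 0 ≤ R x y) (hV₀ : V₀.Nonempty)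
    (hm0 : ∀ x ∈ V₀, ∀ y, hm x y = if x = y then 1 else 0)
    (hmh : ∀ x, x ∉ V₀ → ∀ y, gen R (fun z => hm z y) x = 0)
    {f : V → ℝ} (hf : ∀ x, x ∉ V₀ → gen R f x = 0) (z : V) :
    f z = ∑ y ∈ V₀, hm z y * f y := by
  refine congrFun (hirr.eq_of_gen_eq_zero hR hV₀ hf (h := fun z => ∑ y ∈ V₀, hm z y * f y)
    (fun x hx => ?_) fun x hx => ?_) z
  · simp [gen_sum_mul, hmh x hx]
  · simp [hm0 x hx, Finset.sum_ite_eq, hx]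

lemma gen_eq_genOn_trace (hirr : Irred R) (hR : ∀ x y, 0 ≤ R x y) (hV₀ : V₀.Nonempty)
    (hm0 : ∀ x ∈ V₀, ∀ y, hm x y = if x = y then 1 else 0)
    (hmh : ∀ x, x ∉ V₀ → ∀ y, gen R (fun z => hm z y) x = 0)
    {RV₀ : V → V → ℝ}
    (hRV₀ : ∀ x ∈ V₀, ∀ y ∈ V₀, x ≠ y → RV₀ x y = R x y + ∑ z ∈ V₀ᶜ, R x z * hm z y)
    {u : V → ℝ} (huh : ∀ x, x ∉ V₀ → gen R u x = 0) {x : V} (hx : x ∈ V₀) :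
    gen R u x = genOn V₀ RV₀ u x := by
  have hexit : ∀ z, u z - u x = ∑ y ∈ V₀, hm z y * (u y - u x) :=
    hirr.eq_sum_harmonicMeasure_mul hR hV₀ hm0 hmh (f := fun z => u z - u x)
      fun z hz => by rw [gen_sub_const, huh z hz]
  have hRV₀' : ∀ y ∈ V₀, RV₀ x y * (u y - u x)
      = (R x y + ∑ z ∈ V₀ᶜ, R x z * hm z y) * (u y - u x) := by
    intro y hy
    rcases eq_or_ne x y with rfl | hxy
    · simp
    · rw [hRV₀ x hx y hy hxy]
  calc gen R u x
      = ∑ y ∈ V₀, R x y * (u y - u x) + ∑ z ∈ V₀ᶜ, R x z * (u z - u x) :=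
        (Finset.sum_add_sum_compl V₀ _).symm
    _ = ∑ y ∈ V₀, R x y * (u y - u x)
          + ∑ y ∈ V₀, (∑ z ∈ V₀ᶜ, R x z * hm z y) * (u y - u x) := by
        congr 1
        rw [Finset.sum_congr rfl fun z _ => by rw [hexit z, Finset.mul_sum], Finset.sum_comm]
        simp only [Finset.sum_mul, mul_assoc]
    _ = genOn V₀ RV₀ u x := by
        rw [← Finset.sum_add_distrib, genOn, Finset.sum_congr rfl hRV₀']
        exact Finset.sum_congr rfl fun _ _ => by ring

end Irred

theorem stmt5_general {V : Type*} [Fintype V] [DecidableEq V]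
    (R : V → V → ℝ) (hR : ∀ x y, 0 ≤ R x y)
    (hirr : Irred R)
    (V₀ : Finset V) (hV₀ne : V₀.Nonempty)
    (hm : V → V → ℝ)
    (hm0 : ∀ x ∈ V₀, ∀ y, hm x y = if x = y then 1 else 0)
    (hmh : ∀ x, x ∉ V₀ → ∀ y, gen R (fun z => hm z y) x = 0)
    (RV₀ : V → V → ℝ)
    (hRV₀ : ∀ x ∈ V₀, ∀ y ∈ V₀, x ≠ y → RV₀ x y = R x y + ∑ z ∈ V₀ᶜ, R x z * hm z y)
    (g u : V → ℝ)
    (hu0 : ∀ x ∈ V₀, u x = g x)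
    (huh : ∀ x, x ∉ V₀ → gen R u x = 0)
    (μ : V → ℝ) :
    ∑ x, μ x * (gen R u x / u x) = ∑ x ∈ V₀, μ x * (genOn V₀ RV₀ g x / g x) := by
  have hoff : ∀ x ∈ Finset.univ, x ∉ V₀ → μ x * (gen R u x / u x) = 0 := fun x _ hx => by
    rw [huh x hx, zero_div, mul_zero]
  rw [← Finset.sum_subset (Finset.subset_univ V₀) hoff]
  refine Finset.sum_congr rfl fun x hx => ?_
  have hgen : genOn V₀ RV₀ u x = genOn V₀ RV₀ g x :=
    Finset.sum_congr rfl fun y hy => by rw [hu0 y hy, hu0 x hx]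
  rw [hirr.gen_eq_genOn_trace hR hV₀ne hm0 hmh hRV₀ huh hx, hgen, hu0 x hx]

/-- let `u` be the positive harmonic extension of `g : V₀ → (0,∞)`
(`Lu = 0` off `V₀`, `u = g` on `V₀`).  Then for every probability measure `μ` on `V`,
`∫_V (Lu)/u dμ = ∫_{V₀} (L_{V₀} g)/g dμ`, where `L_{V₀}` is the generator of the trace
process on `V₀`, whose rates are expressed through the harmonic measure `hm`. -/
theorem stmt5 {V : Type*} [Fintype V] [DecidableEq V]
    (R : V → V → ℝ) (hR : ∀ x y, 0 ≤ R x y) (hRdiag : ∀ x, R x x = 0)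
    (hirr : Irred R)
    (V₀ : Finset V) (hV₀ne : V₀.Nonempty)
    (hm : V → V → ℝ)
    (hm0 : ∀ x ∈ V₀, ∀ y, hm x y = if x = y then 1 else 0)
    (hmh : ∀ x, x ∉ V₀ → ∀ y, gen R (fun z => hm z y) x = 0)
    (RV₀ : V → V → ℝ)
    (hRV₀ : ∀ x ∈ V₀, ∀ y ∈ V₀, x ≠ y → RV₀ x y = R x y + ∑ z ∈ V₀ᶜ, R x z * hm z y)
    (hRV₀diag : ∀ x, RV₀ x x = 0)
    (g u : V → ℝ) (hgpos : ∀ x ∈ V₀, 0 < g x)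
    (hupos : ∀ x, 0 < u x)
    (hu0 : ∀ x ∈ V₀, u x = g x)
    (huh : ∀ x, x ∉ V₀ → gen R u x = 0)
    (μ : V → ℝ) (hμ : ∀ x, 0 ≤ μ x) (hμ1 : ∑ x, μ x = 1) :
    ∑ x, μ x * (gen R u x / u x) = ∑ x ∈ V₀, μ x * (genOn V₀ RV₀ g x / g x) :=
  stmt5_general R hR hirr V₀ hV₀ne hm hm0 hmh RV₀ hRV₀ g u hu0 huh μ
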